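/- arXiv:1710.03707 — 2 statements merged into one kernel-verified Lean document; each statement's English description precedes it below -/
import Mathlib

section
/- Let Λ be a finite group of cardinality ℓ ≥ 3 with a bijection ‖·‖ : Λ → {0,…,ℓ−1}, G = (⊕_ℤ Λ) ⋊ ℤ, 𝔫(μ tᵏ) = Σ_{n≥k} ‖μ_n‖ ℓ^{n−k}, b_ℓ : ℕ → Bool the parity of the number of 1s in base ℓ, and σ₀ = b_ℓ ∘ 𝔫 : G → Bool. Then for every g ∈ G, the value σ₀(g) is the strict non-unanimous majority value of σ₀ on the role model set ℜℳ(g) = g t⁻¹ Λ₀: among the ℓ elements of ℜℳ(g), strictly more than ℓ/2 but strictly fewer than ℓ of them are mapped by σ₀ to σ₀(g). -/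
/-- The subgroup of finitely supported functions `ℤ → Λ`, i.e. `⊕_ℤ Λ`. -/
def FinSupp (Λ : Type*) [Group Λ] : Subgroup (ℤ → Λ) where
  carrier := {f | (Function.mulSupport f).Finite}
  one_mem' := by simpa using Set.finite_empty
  mul_mem' := fun hf hg => ((hf.union hg).subset (Function.mulSupport_mul _ _))
  inv_mem' := fun hf => by simpa using hf

/-- The shift automorphism of `⊕_ℤ Λ` by `k`: `(shift k f) n = f (n - k)`. -/
def shiftAut (Λ : Type*) [Group Λ] (k : ℤ) : MulAut (FinSupp Λ) where
  toFun f := ⟨fun n => f.val (n - k), (f.prop.image (· + k)).subset (by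
    intro n hn
    exact ⟨n - k, hn, by ring⟩)⟩
  invFun f := ⟨fun n => f.val (n + k), (f.prop.image (· - k)).subset (by
    intro n hn
    exact ⟨n + k, hn, by ring⟩)⟩
  left_inv f := by ext n; simp
  right_inv f := by ext n; simp
  map_mul' f g := rfl

/-- The lamplighter group `G = (⊕_ℤ Λ) ⋊ ℤ`, with the generator of `ℤ` acting by the
shift `t [λ]_i t⁻¹ = [λ]_{i+1}`. -/
abbrev Lamp (Λ : Type*) [Group Λ] :=
  SemidirectProduct (FinSupp Λ) (Multiplicative ℤ) (zpowersHom _ (shiftAut Λ 1))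

/-- The generator `t` of the `ℤ` factor of the lamplighter group. -/
def tGen (Λ : Type*) [Group Λ] : Lamp Λ :=
  SemidirectProduct.inr (Multiplicative.ofAdd 1)

/-- `[λ]_i`: the element of `⊕_ℤ Λ` supported at coordinate `i` with value `λ`. -/
def lam {Λ : Type*} [Group Λ] (i : ℤ) (x : Λ) : FinSupp Λ :=
  ⟨fun n => if n = i then x else 1, (Set.finite_singleton i).subset (by
    intro n hn
    by_contra h
    exact hn (if_neg h))⟩

/-- `𝔫(μ tᵏ) = Σ_{n ≥ k, n ∈ supp μ} ‖μ_n‖ ℓ^{n−k}`. -/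
noncomputable def nval {Λ : Type*} [Group Λ] (norm : Λ → ℕ) (ℓ : ℕ) (g : Lamp Λ) : ℕ :=
  ∑ n ∈ (g.left.prop.toFinset.filter (fun n => Multiplicative.toAdd g.right ≤ n)),
    norm (g.left.val n) * ℓ ^ (n - Multiplicative.toAdd g.right).toNat

/-- `b ℓ n` is `true` iff the number of `1`s in the base-`ℓ` expansion of `n` is odd. -/
def bSeq (ℓ n : ℕ) : Bool := decide (((Nat.digits ℓ n).count 1) % 2 = 1)

/-! Write `g = μ tᵏ`. Right multiplication by `t⁻¹ [λ]₀` lowers `k` by one and multiplies the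
lamp at `k - 1` by `λ`, so `𝔫(g t⁻¹ [λ]₀) = ‖μ_{k-1} λ‖ + ℓ 𝔫(g)`: the base-`ℓ` expansion of
`𝔫(g)` gets one new lowest digit, which runs over all of `{0, …, ℓ - 1}` as `λ` runs over `Λ`.
The new digit changes the parity of the number of `1`s exactly when it equals `1`, so `σ₀`
agrees with `σ₀(g)` on `ℓ - 1` of the `ℓ` elements of `ℜℳ(g)`, and `ℓ / 2 < ℓ - 1` as `ℓ ≥ 3`. -/

open Finset

section

variable {Λ : Type*} [Group Λ]

@[simp]
lemma shiftAut_apply_val (k : ℤ) (f : FinSupp Λ) (n : ℤ) :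
    (shiftAut Λ k f).val n = f.val (n - k) := rfl

@[simp]
lemma shiftAut_symm_apply_val (k : ℤ) (f : FinSupp Λ) (n : ℤ) :
    ((shiftAut Λ k).symm f).val n = f.val (n + k) := rfl

lemma shiftAut_one_zpow (k : ℤ) : shiftAut Λ 1 ^ k = shiftAut Λ k := by
  induction k using Int.induction_on with
  | zero => ext f n; simp
  | succ k ih => ext f n; simp [zpow_add_one, ih, sub_sub]
  | pred k ih =>
    ext f n
    simp only [zpow_sub_one, ih, MulAut.mul_apply, MulAut.inv_apply, shiftAut_apply_val,
      shiftAut_symm_apply_val]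
    exact congrArg f.val (by ring)

@[simp]
lemma lam_val (i : ℤ) (x : Λ) (n : ℤ) : (lam i x).val n = if n = i then x else 1 := rfl

end

namespace Lamp

variable {Λ : Type*} [Group Λ]

lemma mem_left_toFinset_iff {g : Lamp Λ} {n : ℤ} :
    n ∈ g.left.prop.toFinset ↔ g.left.val n ≠ 1 :=
  Set.Finite.mem_toFinset _

lemma mul_inl_left_val (g : Lamp Λ) (f : FinSupp Λ) (n : ℤ) :
    (g * SemidirectProduct.inl f).left.val n =
      g.left.val n * f.val (n - Multiplicative.toAdd g.right) := by
  simp [shiftAut_one_zpow]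

lemma mul_tGen_inv_left (g : Lamp Λ) : (g * (tGen Λ)⁻¹).left = g.left := by
  simp [tGen]

lemma toAdd_mul_tGen_inv_right (g : Lamp Λ) :
    Multiplicative.toAdd (g * (tGen Λ)⁻¹).right = Multiplicative.toAdd g.right - 1 := by
  simp [tGen, sub_eq_add_neg]

lemma mul_tGen_inv_mul_inl_lam_left_val (g : Lamp Λ) (x : Λ) (n : ℤ) :
    (g * (tGen Λ)⁻¹ * SemidirectProduct.inl (lam 0 x)).left.val n =
      g.left.val n * if n = Multiplicative.toAdd g.right - 1 then x else 1 := by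
  rw [mul_inl_left_val, mul_tGen_inv_left, toAdd_mul_tGen_inv_right, lam_val]
  simp only [sub_eq_zero]

lemma toAdd_mul_tGen_inv_mul_inl_right (g : Lamp Λ) (f : FinSupp Λ) :
    Multiplicative.toAdd (g * (tGen Λ)⁻¹ * SemidirectProduct.inl f).right =
      Multiplicative.toAdd g.right - 1 := by
  rw [SemidirectProduct.mul_right, SemidirectProduct.right_inl, mul_one, toAdd_mul_tGen_inv_right]

lemma nval_eq_sum_of_subset (norm : Λ → ℕ) (hnorm : norm 1 = 0) (ℓ : ℕ) (g : Lamp Λ)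
    (S : Finset ℤ) (hS_ge : ∀ n ∈ S, Multiplicative.toAdd g.right ≤ n)
    (hS : ∀ n, Multiplicative.toAdd g.right ≤ n → g.left.val n ≠ 1 → n ∈ S) :
    nval norm ℓ g =
      ∑ n ∈ S, norm (g.left.val n) * ℓ ^ (n - Multiplicative.toAdd g.right).toNat := by
  refine sum_subset (fun n hn => ?_) (fun n hnS hn => ?_)
  · rw [mem_filter, mem_left_toFinset_iff] at hn
    exact hS n hn.2 hn.1
  · have : g.left.val n = 1 := by
      by_contra hne
      exact hn (mem_filter.mpr ⟨mem_left_toFinset_iff.mpr hne, hS_ge n hnS⟩)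
    rw [this, hnorm, zero_mul]

lemma nval_mul_tGen_inv_mul_inl_lam (norm : Λ → ℕ) (hnorm : norm 1 = 0) (ℓ : ℕ) (g : Lamp Λ)
    (x : Λ) :
    nval norm ℓ (g * (tGen Λ)⁻¹ * SemidirectProduct.inl (lam 0 x)) =
      norm (g.left.val (Multiplicative.toAdd g.right - 1) * x) + ℓ * nval norm ℓ g := by
  set k := Multiplicative.toAdd g.right
  set T := g.left.prop.toFinset.filter (k ≤ ·)
  have hkT : k - 1 ∉ T := by simp [T]
  rw [nval_eq_sum_of_subset norm hnorm ℓ _ (insert (k - 1) T) ?ge ?supp, sum_insert hkT,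
    nval, mul_sum]
  case ge =>
    intro n hn
    rw [toAdd_mul_tGen_inv_mul_inl_right]
    rcases mem_insert.mp hn with rfl | hn
    · rfl
    · rw [mem_filter] at hn; omega
  case supp =>
    intro n hn hne
    rw [toAdd_mul_tGen_inv_mul_inl_right] at hn
    rw [mul_tGen_inv_mul_inl_lam_left_val] at hne
    by_cases hnk : n = k - 1
    · exact mem_insert.mpr (.inl hnk)
    · rw [if_neg hnk, mul_one] at hne
      exact mem_insert_of_mem (mem_filter.mpr ⟨mem_left_toFinset_iff.mpr hne, by omega⟩)
  congr 1
  · rw [mul_tGen_inv_mul_inl_lam_left_val, toAdd_mul_tGen_inv_mul_inl_right, if_pos rfl,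
      sub_self, Int.toNat_zero, pow_zero, mul_one]
  · refine sum_congr rfl fun n hn => ?_
    rw [mem_filter] at hn
    rw [mul_tGen_inv_mul_inl_lam_left_val, if_neg (by omega), mul_one,
      toAdd_mul_tGen_inv_mul_inl_right, show (n - (k - 1)).toNat = (n - k).toNat + 1 by omega,
      pow_succ]
    ring

end Lamp

lemma bSeq_add_mul {ℓ r : ℕ} (hℓ : 1 < ℓ) (hr : r < ℓ) (N : ℕ) :
    bSeq ℓ (r + ℓ * N) = (bSeq ℓ N ^^ decide (r = 1)) := by
  by_cases h0 : r = 0 ∧ N = 0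
  · simp [h0, bSeq]
  rw [bSeq, Nat.digits_add ℓ hℓ r N hr (by omega), List.count_cons, bSeq]
  rcases eq_or_ne r 1 with rfl | hr1
  · rcases Nat.mod_two_eq_zero_or_one ((Nat.digits ℓ N).count 1) with h | h <;>
      simp [Nat.add_mod, h]
  · simp [hr1]

lemma card_filter_bSeq_add_mul_eq {ℓ : ℕ} (hℓ : 1 < ℓ) (N : ℕ) :
    #{r : Fin ℓ | bSeq ℓ (r + ℓ * N) = bSeq ℓ N} = ℓ - 1 := by
  have hfilter : ({r : Fin ℓ | bSeq ℓ (r + ℓ * N) = bSeq ℓ N} : Finset (Fin ℓ)) =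
      univ.erase ⟨1, hℓ⟩ := by
    ext r
    rw [mem_filter, bSeq_add_mul hℓ r.isLt]
    cases bSeq ℓ N <;> simp [Fin.ext_iff]
  rw [hfilter, card_erase_of_mem (mem_univ _), card_univ, Fintype.card_fin]

theorem sigma0_majority_general {Λ : Type*} [Group Λ] [Fintype Λ] {ℓ : ℕ}
    (hℓ : 3 ≤ ℓ) (e : Λ ≃ Fin ℓ) (he : (e 1 : ℕ) = 0) (g : Lamp Λ) :
    ℓ < 2 * (Finset.univ.filter (fun x : Λ =>
        bSeq ℓ (nval (fun y => (e y : ℕ)) ℓ (g * (tGen Λ)⁻¹ * SemidirectProduct.inl (lam 0 x))) =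
          bSeq ℓ (nval (fun y => (e y : ℕ)) ℓ g))).card ∧
    (Finset.univ.filter (fun x : Λ =>
        bSeq ℓ (nval (fun y => (e y : ℕ)) ℓ (g * (tGen Λ)⁻¹ * SemidirectProduct.inl (lam 0 x))) =
          bSeq ℓ (nval (fun y => (e y : ℕ)) ℓ g))).card < ℓ := by
  simp_rw [Lamp.nval_mul_tGen_inv_mul_inl_lam (fun y => (e y : ℕ)) he]
  set N := nval (fun y => (e y : ℕ)) ℓ g
  set c := g.left.val (Multiplicative.toAdd g.right - 1)
  have hcard : #{x : Λ | bSeq ℓ (e (c * x) + ℓ * N) = bSeq ℓ N} = ℓ - 1 := by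
    rw [← card_filter_bSeq_add_mul_eq (by omega) N]
    exact card_equiv ((Equiv.mulLeft c).trans e) fun x => by simp
  rw [hcard]
  omega

/-- with `ℓ ≥ 3`, `σ₀ = b_ℓ ∘ 𝔫` realizes its value at `g` as the
non-unanimous strict majority of its values on the role model set `ℜℳ(g) = g t⁻¹ Λ₀`:
strictly more than `ℓ/2` but strictly fewer than `ℓ` of the `ℓ` elements `g t⁻¹ [λ]₀`
are mapped by `σ₀` to `σ₀(g)`. -/
theorem sigma0_majority {Λ : Type*} [Group Λ] [Fintype Λ] [DecidableEq Λ] {ℓ : ℕ}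
    (hℓ : 3 ≤ ℓ) (e : Λ ≃ Fin ℓ) (he : (e 1 : ℕ) = 0) (g : Lamp Λ) :
    ℓ < 2 * (Finset.univ.filter (fun x : Λ =>
        bSeq ℓ (nval (fun y => (e y : ℕ)) ℓ (g * (tGen Λ)⁻¹ * SemidirectProduct.inl (lam 0 x))) =
          bSeq ℓ (nval (fun y => (e y : ℕ)) ℓ g))).card ∧
    (Finset.univ.filter (fun x : Λ =>
        bSeq ℓ (nval (fun y => (e y : ℕ)) ℓ (g * (tGen Λ)⁻¹ * SemidirectProduct.inl (lam 0 x))) =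
          bSeq ℓ (nval (fun y => (e y : ℕ)) ℓ g))).card < ℓ :=
  sigma0_majority_general hℓ e he g
end

section
/- Let Λ be a finite group of cardinality ℓ ≥ 3 and G = (⊕_ℤ Λ) ⋊ ℤ. Suppose σ : G → Bool satisfies: for every g ∈ G, the value σ(g) occurs strictly more than ℓ/2 but strictly fewer than ℓ times among {σ(g t⁻¹ [λ]₀) : λ ∈ Λ}. Then σ is not fixed by any finite index subgroup of G under the action (σ·g)(h) = σ(gh). Hence the conformist subshift is weakly aperiodic (given it is nonempty). -/
open SemidirectProduct Finset

theorem Bool.eq_of_lt_two_mul_card_filter {α : Type*} [Fintype α] {f : α → Bool} {b b' : Bool}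
    (h : Fintype.card α < 2 * #{x | f x = b}) (h' : Fintype.card α < 2 * #{x | f x = b'}) :
    b = b' := by
  classical
  by_contra hne
  have hdisj : Disjoint (univ.filter fun x => f x = b) (univ.filter fun x => f x = b') :=
    disjoint_filter.mpr fun x _ hb hb' => hne (hb.symm.trans hb')
  have := card_le_univ ((univ.filter fun x => f x = b) ∪ univ.filter fun x => f x = b')
  rw [card_union_of_disjoint hdisj] at this
  omega

namespace FinSupp

variable {Λ : Type*} [Group Λ]

/-- `⊕_{n ∈ s} Λ` -/
def supportedIn (Λ : Type*) [Group Λ] (s : Set ℤ) : Subgroup (FinSupp Λ) where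
  carrier := {f | Function.mulSupport (f : ℤ → Λ) ⊆ s}
  one_mem' := by simp
  mul_mem' hf hg := (Function.mulSupport_mul _ _).trans (Set.union_subset hf hg)
  inv_mem' hf := by simpa using hf

theorem mem_supportedIn {s : Set ℤ} {f : FinSupp Λ} :
    f ∈ supportedIn Λ s ↔ ∀ n, (f : ℤ → Λ) n ≠ 1 → n ∈ s :=
  Iff.rfl

theorem supportedIn_mono {s t : Set ℤ} (h : s ⊆ t) : supportedIn Λ s ≤ supportedIn Λ t :=
  fun _ hf => hf.trans h

theorem lam_apply (i : ℤ) (x : Λ) (n : ℤ) : (lam i x : ℤ → Λ) n = if n = i then x else 1 :=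
  rfl

theorem lam_mem_supportedIn {s : Set ℤ} {i : ℤ} (hi : i ∈ s) (x : Λ) :
    lam i x ∈ supportedIn Λ s := by
  intro n hn
  by_cases h : n = i
  · exact h ▸ hi
  · exact absurd (if_neg h) hn

theorem lam_mul_lam (i : ℤ) (x y : Λ) : lam i x * lam i y = lam i (x * y) := by
  ext n
  simp only [Subgroup.coe_mul, Pi.mul_apply, lam_apply]
  split_ifs <;> simp

theorem commute_lam_of_apply_eq_one {f : FinSupp Λ} {i : ℤ} (hf : (f : ℤ → Λ) i = 1) (x : Λ) :
    Commute f (lam i x) := by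
  ext n
  simp only [Subgroup.coe_mul, Pi.mul_apply, lam_apply]
  split_ifs with h
  · simp [h, hf]
  · simp

theorem shiftAut_apply (k : ℤ) (f : FinSupp Λ) (n : ℤ) :
    (shiftAut Λ k f : ℤ → Λ) n = (f : ℤ → Λ) (n - k) :=
  rfl

theorem shiftAut_one_inv_mem_supportedIn_Iio {f : FinSupp Λ}
    (hf : f ∈ supportedIn Λ (Set.Iic 0)) : (shiftAut Λ 1)⁻¹ f ∈ supportedIn Λ (Set.Iio 0) := by
  intro n hn
  have := hf hn
  simp only [Set.mem_Iic, Set.mem_Iio] at this ⊢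
  omega

theorem exists_mem_supportedIn_Ico {f : FinSupp Λ} (hf : f ∈ supportedIn Λ (Set.Iio 0)) :
    ∃ k : ℕ, f ∈ supportedIn Λ (Set.Ico (-k) 0) := by
  obtain ⟨b, hb⟩ := f.prop.bddBelow
  refine ⟨(-b).toNat, fun n hn => ⟨?_, hf hn⟩⟩
  have := hb hn
  omega

end FinSupp

open FinSupp

section Lamplighter

variable {Λ : Type*} [Group Λ]

theorem tGen_mul_inl_mul_tGen_inv (f : FinSupp Λ) :
    tGen Λ * inl f * (tGen Λ)⁻¹ = inl (shiftAut Λ 1 f) := by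
  rw [tGen, ← map_inv, ← inl_aut]
  simp

theorem tGen_inv_mul_inl_mul_tGen (f : FinSupp Λ) :
    (tGen Λ)⁻¹ * inl f * tGen Λ = inl ((shiftAut Λ 1)⁻¹ f) := by
  rw [tGen, ← map_inv, ← inl_aut_inv]
  simp

theorem inl_mul_tGen_inv (f : FinSupp Λ) :
    inl f * (tGen Λ)⁻¹ = (tGen Λ)⁻¹ * inl (shiftAut Λ 1 f) := by
  rw [← tGen_mul_inl_mul_tGen_inv]
  group

theorem inl_mul_tGen_inv_pow_succ_mul_tGen_pow_succ {f : FinSupp Λ}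
    (hf : f ∈ supportedIn Λ (Set.Iic 0)) (M : ℕ) :
    ∃ ν ∈ supportedIn Λ (Set.Iio 0),
      (inl f * (tGen Λ)⁻¹) ^ (M + 1) * tGen Λ ^ (M + 1) = inl (f * ν) := by
  induction M with
  | zero => exact ⟨1, one_mem _, by simp⟩
  | succ M ih =>
    obtain ⟨ν, hν, heq⟩ := ih
    have hfν : f * ν ∈ supportedIn Λ (Set.Iic 0) :=
      mul_mem hf (supportedIn_mono Set.Iio_subset_Iic_self hν)
    refine ⟨(shiftAut Λ 1)⁻¹ (f * ν), shiftAut_one_inv_mem_supportedIn_Iio hfν, ?_⟩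
    calc (inl f * (tGen Λ)⁻¹) ^ (M + 2) * tGen Λ ^ (M + 2)
        = inl f * ((tGen Λ)⁻¹ * ((inl f * (tGen Λ)⁻¹) ^ (M + 1) * tGen Λ ^ (M + 1)) * tGen Λ) := by
          rw [pow_succ' _ (M + 1), pow_succ _ (M + 1)]
          group
      _ = inl (f * (shiftAut Λ 1)⁻¹ (f * ν)) := by
          rw [heq, tGen_inv_mul_inl_mul_tGen, ← map_mul]

def roleModel (g : Lamp Λ) (x : Λ) : Lamp Λ :=
  g * (tGen Λ)⁻¹ * inl (lam 0 x)

end Lamplighter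

section Conformist

variable {Λ : Type*} [Group Λ] [Fintype Λ]

def FollowsMajority (σ : Lamp Λ → Bool) : Prop :=
  ∀ g, Fintype.card Λ < 2 * #{x | σ (roleModel g x) = σ g}

variable {σ : Lamp Λ → Bool}

theorem FollowsMajority.apply_eq_of_perm (hσ : FollowsMajority σ) {g g' : Lamp Λ}
    (e : Equiv.Perm Λ) (he : ∀ x, σ (roleModel g' x) = σ (roleModel g (e x))) : σ g' = σ g := by
  have hcard : #{x | σ (roleModel g' x) = σ g'} = #{x | σ (roleModel g x) = σ g'} :=
    card_equiv e (by simp [he])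
  exact Bool.eq_of_lt_two_mul_card_filter (hcard ▸ hσ g') (hσ g)

theorem FollowsMajority.apply_mul_inl_of_mem_Ico (hσ : FollowsMajority σ) (k : ℕ) (g : Lamp Λ)
    {ν : FinSupp Λ} (hν : ν ∈ supportedIn Λ (Set.Ico (-k) 0)) : σ (g * inl ν) = σ g := by
  induction k generalizing g ν with
  | zero =>
    have : ν = 1 := by
      ext n
      by_contra h
      simpa using hν h
    rw [this, map_one, mul_one]
  | succ k ih =>
    -- Moving `ν` past `t⁻¹` shifts it by one; its entry landing at `0` joins the role model's lamp.
    set c := (ν : ℤ → Λ) (-1)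
    set ν' := (lam 0 c)⁻¹ * shiftAut Λ 1 ν
    have hν' : ν' ∈ supportedIn Λ (Set.Ico (-k) 0) := by
      rw [mem_supportedIn]
      intro n hn
      by_cases h0 : n = 0
      · subst h0
        simp [ν', c, lam_apply, shiftAut_apply] at hn
      · simp only [ν', Subgroup.coe_mul, Subgroup.coe_inv, Pi.mul_apply, Pi.inv_apply,
          lam_apply, if_neg h0, inv_one, one_mul, shiftAut_apply] at hn
        have := hν hn
        simp only [Set.mem_Ico] at this ⊢
        omega
    have hν'0 : (ν' : ℤ → Λ) 0 = 1 := by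
      simp [ν', c, lam_apply, shiftAut_apply]
    refine hσ.apply_eq_of_perm (Equiv.mulLeft c) fun y => ?_
    have hrole : roleModel (g * inl ν) y = roleModel g (c * y) * inl ν' := by
      calc roleModel (g * inl ν) y
          = g * (tGen Λ)⁻¹ * inl (lam 0 c * ν' * lam 0 y) := by
            rw [roleModel, mul_assoc g, inl_mul_tGen_inv]
            simp only [ν', mul_inv_cancel_left, map_mul, mul_assoc]
        _ = roleModel g (c * y) * inl ν' := by
            rw [mul_assoc (lam 0 c), (commute_lam_of_apply_eq_one hν'0 y).eq, ← mul_assoc,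
              lam_mul_lam]
            simp only [roleModel, map_mul, mul_assoc]
    rw [hrole, ih _ hν']
    rfl

theorem FollowsMajority.apply_mul_inl_of_mem (hσ : FollowsMajority σ) (g : Lamp Λ)
    {ν : FinSupp Λ} (hν : ν ∈ supportedIn Λ (Set.Iio 0)) : σ (g * inl ν) = σ g :=
  let ⟨k, hk⟩ := exists_mem_supportedIn_Ico hν
  hσ.apply_mul_inl_of_mem_Ico k g hk

end Conformist

theorem conformist_weakly_aperiodic_general {Λ : Type*} [Group Λ] [Fintype Λ] {ℓ : ℕ}
    (hcard : Fintype.card Λ = ℓ) (σ : Lamp Λ → Bool)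
    (hσ : ∀ g : Lamp Λ,
      ℓ < 2 * (Finset.univ.filter (fun x : Λ =>
          σ (g * (tGen Λ)⁻¹ * SemidirectProduct.inl (lam 0 x)) = σ g)).card ∧
      (Finset.univ.filter (fun x : Λ =>
          σ (g * (tGen Λ)⁻¹ * SemidirectProduct.inl (lam 0 x)) = σ g)).card < ℓ) :
    ¬ ∃ Γ : Subgroup (Lamp Λ), Γ.FiniteIndex ∧
        ∀ γ ∈ Γ, ∀ h : Lamp Λ, σ (γ * h) = σ h := by
  rintro ⟨Γ, hΓ, hfix⟩
  have hmaj : FollowsMajority σ := fun g => hcard ▸ (hσ g).1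
  obtain ⟨M, hM⟩ := Nat.exists_eq_succ_of_ne_zero (Nat.factorial_ne_zero Γ.index)
  have hpow (g : Lamp Λ) : g ^ (M + 1) ∈ Γ := by
    rw [← Nat.succ_eq_add_one, ← hM]
    exact Γ.pow_mem_of_index_ne_zero_of_dvd hΓ.index_ne_zero g
      fun _ hm hle => Nat.dvd_factorial hm hle
  have hlam (x : Λ) : σ (inl (lam 0 x)) = σ 1 := by
    obtain ⟨ν, hν, heq⟩ :=
      inl_mul_tGen_inv_pow_succ_mul_tGen_pow_succ (lam_mem_supportedIn Set.self_mem_Iic x) M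
    have hw : inl (lam 0 x * ν) ∈ Γ := heq ▸ mul_mem (hpow _) (hpow _)
    calc σ (inl (lam 0 x)) = σ (inl (lam 0 x * ν)) := by
          rw [map_mul, hmaj.apply_mul_inl_of_mem _ hν]
      _ = σ 1 := by simpa using hfix _ hw 1
  obtain ⟨hpos, hlt⟩ := hσ (tGen Λ)
  simp only [mul_inv_cancel, one_mul, hlam, filter_const] at hpos hlt
  split_ifs at hpos hlt <;> simp_all

/-- if `σ : G → Bool` satisfies the conformist (non-unanimous strict
majority) condition on every role model set, then `σ` is not fixed by any finite index
subgroup of `G` under the action `(σ·g)(h) = σ(gh)`. -/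
theorem conformist_weakly_aperiodic {Λ : Type*} [Group Λ] [Fintype Λ] [DecidableEq Λ] {ℓ : ℕ}
    (hℓ : 3 ≤ ℓ) (hcard : Fintype.card Λ = ℓ) (σ : Lamp Λ → Bool)
    (hσ : ∀ g : Lamp Λ,
      ℓ < 2 * (Finset.univ.filter (fun x : Λ =>
          σ (g * (tGen Λ)⁻¹ * SemidirectProduct.inl (lam 0 x)) = σ g)).card ∧
      (Finset.univ.filter (fun x : Λ =>
          σ (g * (tGen Λ)⁻¹ * SemidirectProduct.inl (lam 0 x)) = σ g)).card < ℓ) :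
    ¬ ∃ Γ : Subgroup (Lamp Λ), Γ.FiniteIndex ∧
        ∀ γ ∈ Γ, ∀ h : Lamp Λ, σ (γ * h) = σ h :=
  conformist_weakly_aperiodic_general hcard σ hσ
end
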